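/- Let d ≥ 1, M ≥ 2, let p, p_1, …, p_M ∈ ℝ^d with p ≠ p_m for all m, and let c > 0. Define τ_m = ‖p − p_m‖₂/c, the delay-gradient vectors g_i ∈ ℝ^M by [g_i]_m = (p_i − [p_m]_i)/(c‖p − p_m‖₂), the centering projection P = I_M − (1/M)𝟙𝟙ᵀ, the geometry matrix G ∈ ℝ^{d×d} by G_{ij} = (P g_i)ᵀ(P g_j), and for f ∈ ℝ the steering vector v(f) ∈ ℂ^M with [v(f)]_m = exp(−2πℹ f τ_m). Fix 0 < f_L < f_H, S_H > 0, N₀ > 0, and a rate R > 0. Set the band-selective water level λ_sel = (S_H + N₀)·2^{−R/(f_H − f_L)}, gain B_H = 1 − λ_sel/(S_H + N₀), effective noise S_{w,H} = B_H² N₀ + λ_sel B_H, γ_H = S_H B_H²/S_{w,H}, and w_H = 2Mγ_H²/(1 + Mγ_H). For f with f_L < |f| ≤ f_H let S(f) = S_H B_H² v(f)v(f)* + S_{w,H} I_M and S'_i(f) = 2πℹ f S_H B_H² (v(f)v(f)* D_i − D_i v(f)v(f)*), where D_i = diag(g_i). Then 0 < λ_sel < S_H + N₀, the rate constraint (f_H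 − f_L)·log₂((S_H + N₀)/λ_sel) = R holds, and for all 1 ≤ i, j ≤ d: (1/2)∫_{{f : f_L < |f| ≤ f_H}} tr(S(f)^{-1} S'_i(f) S(f)^{-1} S'_j(f)) df = (4π²/3)·(f_H³ − f_L³)·w_H·G_{ij}. -/

import Mathlib

/-!
On the band the spectral matrix is `S = a Q + b I` with `Q = v v*` and `Q² = M Q` (the steering
vector is unimodular), so `S⁻¹ = b⁻¹ I - a / (b (b + a M)) Q` lies in the algebra generated by `Q`.
The derivative `S'ᵢ` is a multiple of the commutator `[Q, Dᵢ]`, and any `X = α I + β Q` satisfies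
`X [Q, A] X = α (α + β M) [Q, A]` because `Q [Q, A] Q = 0` and `Q [Q, A] + [Q, A] Q = M [Q, A]`.
Hence the integrand is `(2π f a)² / (b (b + a M))` times `-tr([Q, Dᵢ] [Q, Dⱼ]) = 2 M Gᵢⱼ`, i.e.
`4π² f² w_H Gᵢⱼ`, and integrating `f²` over the two-sided band gives `2 (f_H³ - f_L³) / 3`.
-/

open Matrix Real MeasureTheory

namespace Matrix

section RankOne

variable {n R : Type*} [Fintype n] [CommRing R] (u w : n → R)

theorem vecMulVec_mul_self : vecMulVec u w * vecMulVec u w = (w ⬝ᵥ u) • vecMulVec u w := by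
  rw [vecMulVec_mul_vecMulVec, vecMulVec_smul]

theorem trace_vecMulVec_mul (A : Matrix n n R) : trace (vecMulVec u w * A) = w ⬝ᵥ A *ᵥ u := by
  rw [vecMulVec_mul, trace_vecMulVec, dotProduct_comm, ← dotProduct_mulVec]

theorem vecMulVec_mul_mul_vecMulVec (A : Matrix n n R) :
    vecMulVec u w * A * vecMulVec u w = (w ⬝ᵥ A *ᵥ u) • vecMulVec u w := by
  rw [vecMulVec_mul, vecMulVec_mul_vecMulVec, vecMulVec_smul, dotProduct_mulVec]

theorem trace_lie_vecMulVec_mul_lie_vecMulVec (A B : Matrix n n R) :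
    trace (⁅vecMulVec u w, A⁆ * ⁅vecMulVec u w, B⁆) =
      2 * (w ⬝ᵥ A *ᵥ u) * (w ⬝ᵥ B *ᵥ u) -
        (w ⬝ᵥ u) * (w ⬝ᵥ (A * B) *ᵥ u + w ⬝ᵥ (B * A) *ᵥ u) := by
  set Q := vecMulVec u w
  have hQAQB : trace (Q * A * (Q * B)) = (w ⬝ᵥ A *ᵥ u) * (w ⬝ᵥ B *ᵥ u) := by
    rw [← Matrix.mul_assoc, vecMulVec_mul_mul_vecMulVec, smul_mul_assoc, trace_smul,
      trace_vecMulVec_mul, smul_eq_mul]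
  have hQQ : ∀ C : Matrix n n R, trace (Q * Q * C) = (w ⬝ᵥ u) * (w ⬝ᵥ C *ᵥ u) := fun C => by
    rw [vecMulVec_mul_self, smul_mul_assoc, trace_smul, trace_vecMulVec_mul, smul_eq_mul]
  have hAQBQ : trace (A * Q * (B * Q)) = trace (Q * A * (Q * B)) := by
    rw [← Matrix.mul_assoc, trace_mul_comm]; simp only [Matrix.mul_assoc]
  have hQABQ : trace (Q * A * (B * Q)) = trace (Q * Q * (A * B)) := by
    rw [← Matrix.mul_assoc, trace_mul_comm]; simp only [Matrix.mul_assoc]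
  have hAQQB : trace (A * Q * (Q * B)) = trace (Q * Q * (B * A)) := by
    rw [Matrix.mul_assoc, trace_mul_comm]; simp only [Matrix.mul_assoc]
  rw [Ring.lie_def, Ring.lie_def, sub_mul, mul_sub, mul_sub, trace_sub, trace_sub, trace_sub,
    hAQBQ, hQABQ, hAQQB, hQAQB, hQQ, hQQ]
  ring

end RankOne

theorem star_dotProduct_diagonal_mulVec {n R : Type*} [Fintype n] [DecidableEq n]
    [CommSemiring R] [StarRing R] {u : n → R} (hu : ∀ m, star (u m) * u m = 1) (a : n → R) :
    star u ⬝ᵥ diagonal a *ᵥ u = ∑ m, a m := by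
  simp only [dotProduct, mulVec_diagonal, Pi.star_apply]
  refine Finset.sum_congr rfl fun m _ => ?_
  rw [mul_left_comm, hu, mul_one]

section MulSelfEqSMul

variable {n : Type*} [Fintype n] [DecidableEq n]

theorem smul_one_add_smul_mul_lie_mul {R : Type*} [CommRing R] {Q : Matrix n n R} {s : R}
    (hQ : Q * Q = s • Q) (α β : R) (A : Matrix n n R) :
    (α • 1 + β • Q) * ⁅Q, A⁆ * (α • 1 + β • Q) = (α * (α + β * s)) • ⁅Q, A⁆ := by
  have hQCQ : Q * ⁅Q, A⁆ * Q = 0 := by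
    simp only [Ring.lie_def, mul_sub, sub_mul, ← Matrix.mul_assoc]
    rw [hQ, Matrix.mul_assoc (Q * A) Q Q, hQ, smul_mul_assoc, smul_mul_assoc, mul_smul_comm,
      sub_self]
  have hQC : Q * ⁅Q, A⁆ + ⁅Q, A⁆ * Q = s • ⁅Q, A⁆ := by
    simp only [Ring.lie_def, mul_sub, sub_mul, ← Matrix.mul_assoc, hQ]
    simp only [Matrix.mul_assoc, hQ, smul_sub, smul_mul_assoc, mul_smul_comm]
    abel
  calc (α • 1 + β • Q) * ⁅Q, A⁆ * (α • 1 + β • Q)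
      = (α * α) • ⁅Q, A⁆ + (α * β) • (Q * ⁅Q, A⁆ + ⁅Q, A⁆ * Q) +
          (β * β) • (Q * ⁅Q, A⁆ * Q) := by
        simp only [add_mul, mul_add, smul_mul_assoc, mul_smul_comm, Matrix.one_mul,
          Matrix.mul_one, smul_smul, smul_add]
        module
    _ = (α * (α + β * s)) • ⁅Q, A⁆ := by
        rw [hQCQ, hQC, smul_zero, add_zero, smul_smul, ← add_smul]
        ring_nf

variable {K : Type*} [Field K] {Q : Matrix n n K} {s : K}

theorem inv_smul_add_smul_one_of_mul_self_eq (hQ : Q * Q = s • Q) {a b : K} (hb : b ≠ 0)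
    (hbs : b + a * s ≠ 0) :
    (a • Q + b • 1)⁻¹ = b⁻¹ • 1 - (a / (b * (b + a * s))) • Q := by
  refine inv_eq_right_inv ?_
  simp only [add_mul, mul_sub, smul_mul_assoc, mul_smul_comm, Matrix.one_mul, Matrix.mul_one,
    hQ, smul_smul]
  rw [← sub_eq_zero, ← one_smul K (1 : Matrix n n K)]
  match_scalars <;> field_simp <;> ring

theorem trace_inv_mul_lie_mul_inv_mul_lie (hQ : Q * Q = s • Q) {a b : K} (hb : b ≠ 0)
    (hbs : b + a * s ≠ 0) (A B : Matrix n n K) :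
    trace ((a • Q + b • 1)⁻¹ * ⁅Q, A⁆ * (a • Q + b • 1)⁻¹ * ⁅Q, B⁆) =
      (b * (b + a * s))⁻¹ * trace (⁅Q, A⁆ * ⁅Q, B⁆) := by
  rw [inv_smul_add_smul_one_of_mul_self_eq hQ hb hbs, sub_eq_add_neg, ← neg_smul,
    smul_one_add_smul_mul_lie_mul hQ, smul_mul_assoc, trace_smul, smul_eq_mul]
  congr 1
  field_simp
  ring

end MulSelfEqSMul

theorem trace_inv_mul_lie_diagonal_mul_inv_mul_lie_diagonal {n K : Type*} [Fintype n]
    [DecidableEq n] [Field K] [StarRing K] {u : n → K} (hu : ∀ m, star (u m) * u m = 1)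
    {a b : K} (hb : b ≠ 0) (hbs : b + a * Fintype.card n ≠ 0) (x y : n → K) :
    trace ((a • vecMulVec u (star u) + b • 1)⁻¹ * ⁅vecMulVec u (star u), diagonal x⁆ *
        (a • vecMulVec u (star u) + b • 1)⁻¹ * ⁅vecMulVec u (star u), diagonal y⁆) =
      2 * (b * (b + a * Fintype.card n))⁻¹ *
        ((∑ m, x m) * (∑ m, y m) - Fintype.card n * ∑ m, x m * y m) := by
  have hnorm : star u ⬝ᵥ u = Fintype.card n := by
    simpa using star_dotProduct_diagonal_mulVec hu 1
  have hQ := vecMulVec_mul_self u (star u)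
  rw [hnorm] at hQ
  rw [trace_inv_mul_lie_mul_inv_mul_lie hQ hb hbs, trace_lie_vecMulVec_mul_lie_vecMulVec,
    diagonal_mul_diagonal, diagonal_mul_diagonal, star_dotProduct_diagonal_mulVec hu,
    star_dotProduct_diagonal_mulVec hu, star_dotProduct_diagonal_mulVec hu,
    star_dotProduct_diagonal_mulVec hu, hnorm]
  simp_rw [mul_comm (y _)]
  ring

theorem centering_mulVec_dotProduct {n : Type*} [Fintype n] [DecidableEq n] [Nonempty n]
    (x y : n → ℝ) :
    ((1 : Matrix n n ℝ) - ((Fintype.card n : ℝ))⁻¹ • vecMulVec 1 1) *ᵥ x ⬝ᵥ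
      ((1 : Matrix n n ℝ) - ((Fintype.card n : ℝ))⁻¹ • vecMulVec 1 1) *ᵥ y =
      x ⬝ᵥ y - (Fintype.card n : ℝ)⁻¹ * ((∑ m, x m) * ∑ m, y m) := by
  have hcard : (Fintype.card n : ℝ) ≠ 0 := Nat.cast_ne_zero.2 Fintype.card_ne_zero
  have hP : ∀ z : n → ℝ, ((1 : Matrix n n ℝ) - ((Fintype.card n : ℝ))⁻¹ • vecMulVec 1 1) *ᵥ z =
      z - ((Fintype.card n : ℝ)⁻¹ * ∑ m, z m) • 1 := fun z => by
    rw [sub_mulVec, one_mulVec, smul_mulVec, vecMulVec_mulVec]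
    ext m; simp [dotProduct]
  rw [hP, hP]
  simp only [sub_dotProduct, dotProduct_sub, smul_dotProduct, dotProduct_smul, dotProduct_one,
    one_dotProduct, smul_eq_mul, Pi.sub_apply, Pi.smul_apply, Pi.one_apply, mul_one,
    Finset.sum_sub_distrib, Finset.sum_const, Finset.card_univ, nsmul_eq_mul]
  field_simp
  ring

end Matrix

theorem Complex.star_exp_mul_self_of_re_eq_zero {z : ℂ} (hz : z.re = 0) :
    star (Complex.exp z) * Complex.exp z = 1 := by
  rw [Complex.star_def, Complex.conj_mul', Complex.norm_exp, hz, Real.exp_zero]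
  simp

theorem water_level_pos_lt_and_logb {K W R lam : ℝ} (hK : 0 < K) (hW : 0 < W) (hR : 0 < R)
    (hlam : lam = K * (2 : ℝ) ^ (-(R / W))) :
    0 < lam ∧ lam < K ∧ W * Real.logb 2 (K / lam) = R := by
  have hpow : (2 : ℝ) ^ (-(R / W)) < 1 :=
    Real.rpow_lt_one_of_one_lt_of_neg one_lt_two (neg_lt_zero.2 (div_pos hR hW))
  subst hlam
  refine ⟨by positivity, mul_lt_of_lt_one_right hK hpow, ?_⟩
  rw [div_mul_cancel_left₀ hK.ne', ← Real.rpow_neg_one, ← Real.rpow_mul two_pos.le,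
    Real.logb_rpow two_pos (by norm_num)]
  field_simp

theorem setOf_abs_mem_Ioc {a b : ℝ} (ha : 0 ≤ a) :
    {x : ℝ | a < |x| ∧ |x| ≤ b} = Set.Ico (-b) (-a) ∪ Set.Ioc a b := by
  ext x
  simp only [Set.mem_ofPred_eq, Set.mem_union, Set.mem_Ico, Set.mem_Ioc]
  rcases le_or_gt x 0 with hx | hx
  · rw [abs_of_nonpos hx]; constructor
    · rintro ⟨h₁, h₂⟩; exact Or.inl ⟨by linarith, by linarith⟩
    · rintro (⟨h₁, h₂⟩ | ⟨h₁, h₂⟩) <;> constructor <;> linarith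
  · rw [abs_of_pos hx]; constructor
    · exact Or.inr
    · rintro (⟨h₁, h₂⟩ | h) <;> [exact absurd hx (by linarith); exact h]

theorem setIntegral_sq_setOf_abs_mem_Ioc {a b : ℝ} (ha : 0 ≤ a) (hab : a ≤ b) :
    ∫ x in {x : ℝ | a < |x| ∧ |x| ≤ b}, x ^ 2 = 2 * (b ^ 3 - a ^ 3) / 3 := by
  have hdisj : Disjoint (Set.Ico (-b) (-a)) (Set.Ioc a b) :=
    Set.disjoint_left.2 fun x h₁ h₂ => by linarith [h₁.2, h₂.1]
  rw [setOf_abs_mem_Ioc ha, setIntegral_union hdisj measurableSet_Ioc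
    ((continuous_pow 2).integrableOn_Icc.mono_set Set.Ico_subset_Icc_self)
    (continuous_pow 2).integrableOn_Ioc, setIntegral_congr_set Ico_ae_eq_Ioc,
    ← intervalIntegral.integral_of_le (neg_le_neg hab), ← intervalIntegral.integral_of_le hab,
    integral_pow, integral_pow]
  ring

theorem band_selective_FI_rate_general
    (d M : ℕ) (hM : 2 ≤ M)
    (τ : Fin M → ℝ)
    (g : Fin d → Fin M → ℝ)
    (P : Matrix (Fin M) (Fin M) ℝ)
    (hP : P = (1 : Matrix (Fin M) (Fin M) ℝ) - ((M : ℝ))⁻¹ • vecMulVec 1 1)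
    (G : Fin d → Fin d → ℝ)
    (hG : ∀ i j, G i j = P.mulVec (g i) ⬝ᵥ P.mulVec (g j))
    (v : ℝ → Fin M → ℂ)
    (hv : ∀ f m, v f m = Complex.exp (-(2 * π * Complex.I * f * τ m)))
    (fL fH SH N0 R : ℝ)
    (hfL : 0 < fL) (hfLH : fL < fH) (hSH : 0 < SH) (hN0 : 0 < N0) (hR : 0 < R)
    (lamSel : ℝ) (hlamSel : lamSel = (SH + N0) * (2 : ℝ) ^ (-(R / (fH - fL))))
    (BH : ℝ) (hBH : BH = 1 - lamSel / (SH + N0))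
    (SwH : ℝ) (hSwH : SwH = BH ^ 2 * N0 + lamSel * BH)
    (γH : ℝ) (hγH : γH = SH * BH ^ 2 / SwH)
    (wH : ℝ) (hwH : wH = 2 * M * γH ^ 2 / (1 + M * γH))
    (D : Fin d → Matrix (Fin M) (Fin M) ℂ)
    (hD : ∀ i, D i = Matrix.diagonal fun m => (g i m : ℂ))
    (S : ℝ → Matrix (Fin M) (Fin M) ℂ)
    (S' : Fin d → ℝ → Matrix (Fin M) (Fin M) ℂ)
    (hShigh : ∀ f : ℝ, fL < |f| → |f| ≤ fH →
      S f = ((SH * BH ^ 2 : ℝ) : ℂ) • vecMulVec (v f) (star (v f))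
        + ((SwH : ℝ) : ℂ) • (1 : Matrix (Fin M) (Fin M) ℂ))
    (hS'high : ∀ (i : Fin d) (f : ℝ), fL < |f| → |f| ≤ fH →
      S' i f = (2 * π * Complex.I * f * (SH * BH ^ 2)) •
        (vecMulVec (v f) (star (v f)) * D i - D i * vecMulVec (v f) (star (v f)))) :
    0 < lamSel ∧ lamSel < SH + N0 ∧
    (fH - fL) * Real.logb 2 ((SH + N0) / lamSel) = R ∧
    ∀ i j : Fin d,
      (1 / 2 : ℂ) * ∫ f in {f : ℝ | fL < |f| ∧ |f| ≤ fH},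
          Matrix.trace ((S f)⁻¹ * S' i f * (S f)⁻¹ * S' j f)
        = (((4 * π ^ 2 / 3) * (fH ^ 3 - fL ^ 3) * wH * G i j : ℝ) : ℂ) := by
  obtain ⟨hlam, hlamlt, hrate⟩ :=
    water_level_pos_lt_and_logb (by linarith) (sub_pos.2 hfLH) hR hlamSel
  refine ⟨hlam, hlamlt, hrate, fun i j => ?_⟩
  have hBH0 : 0 < BH := by rw [hBH, sub_pos, div_lt_one (by linarith)]; exact hlamlt
  have hSwH0 : 0 < SwH := by rw [hSwH]; positivity
  have hM0 : (0 : ℝ) < M := by exact_mod_cast (by omega : 0 < M)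
  have hSwHℂ : (SwH : ℂ) ≠ 0 := by exact_mod_cast hSwH0.ne'
  have hMℂ : (M : ℂ) ≠ 0 := by exact_mod_cast hM0.ne'
  have : NeZero M := ⟨by omega⟩
  have hG' := centering_mulVec_dotProduct (g i) (g j)
  rw [Fintype.card_fin, ← hP, ← hG] at hG'
  have hden : (SwH : ℂ) + ((SH * BH ^ 2 : ℝ) : ℂ) * (Fintype.card (Fin M) : ℕ) ≠ 0 := by
    rw [Fintype.card_fin]; exact_mod_cast (by positivity : (0 : ℝ) < SwH + SH * BH ^ 2 * M).ne'
  have hband : ∀ f ∈ {f : ℝ | fL < |f| ∧ |f| ≤ fH},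
      trace ((S f)⁻¹ * S' i f * (S f)⁻¹ * S' j f) = ((4 * π ^ 2 * wH * G i j * f ^ 2 : ℝ) : ℂ) := by
    rintro f ⟨hf₁, hf₂⟩
    have hunit : ∀ m, star (v f m) * v f m = 1 := fun m => by
      rw [hv]; exact Complex.star_exp_mul_self_of_re_eq_zero (by simp)
    rw [hShigh f hf₁ hf₂, hS'high i f hf₁ hf₂, hS'high j f hf₁ hf₂, ← Ring.lie_def,
      ← Ring.lie_def, hD, hD]
    simp only [mul_smul_comm, smul_mul_assoc, smul_smul, trace_smul]
    rw [trace_inv_mul_lie_diagonal_mul_inv_mul_lie_diagonal hunit hSwHℂ hden, hG', hwH, hγH,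
      Fintype.card_fin, smul_eq_mul]
    push_cast [dotProduct] at hden ⊢
    field_simp
    ring_nf
    rw [Complex.I_sq]
    ring
  have hband_meas : MeasurableSet {f : ℝ | fL < |f| ∧ |f| ≤ fH} :=
    measurableSet_Ioc.preimage continuous_abs.measurable
  rw [setIntegral_congr_fun hband_meas hband, integral_complex_ofReal, integral_const_mul,
    setIntegral_sq_setOf_abs_mem_Ioc hfL.le hfLH.le]
  push_cast
  ring

/-- **Fisher-information rate of the band-selective scheme**: suppressing the low band
and applying the Gaussian test channel only on the high band with water level
`λ_sel = (S_H + N₀) 2^{−R/(f_H − f_L)}`, the rate constraint holds with equality and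
the Whittle Fisher-information rate equals `(4π²/3)(f_H³ − f_L³) w_H^{sel} G_{ij}`. -/
theorem band_selective_FI_rate
    (d M : ℕ) (hd : 1 ≤ d) (hM : 2 ≤ M)
    (p : EuclideanSpace ℝ (Fin d)) (ps : Fin M → EuclideanSpace ℝ (Fin d))
    (hps : ∀ m, p ≠ ps m) (c : ℝ) (hc : 0 < c)
    (τ : Fin M → ℝ) (hτ : ∀ m, τ m = ‖p - ps m‖ / c)
    (g : Fin d → Fin M → ℝ)
    (hg : ∀ i m, g i m = (p i - ps m i) / (c * ‖p - ps m‖))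
    (P : Matrix (Fin M) (Fin M) ℝ)
    (hP : P = (1 : Matrix (Fin M) (Fin M) ℝ) - ((M : ℝ))⁻¹ • vecMulVec 1 1)
    (G : Fin d → Fin d → ℝ)
    (hG : ∀ i j, G i j = P.mulVec (g i) ⬝ᵥ P.mulVec (g j))
    (v : ℝ → Fin M → ℂ)
    (hv : ∀ f m, v f m = Complex.exp (-(2 * π * Complex.I * f * τ m)))
    (fL fH SH N0 R : ℝ)
    (hfL : 0 < fL) (hfLH : fL < fH) (hSH : 0 < SH) (hN0 : 0 < N0) (hR : 0 < R)
    (lamSel : ℝ) (hlamSel : lamSel = (SH + N0) * (2 : ℝ) ^ (-(R / (fH - fL))))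
    (BH : ℝ) (hBH : BH = 1 - lamSel / (SH + N0))
    (SwH : ℝ) (hSwH : SwH = BH ^ 2 * N0 + lamSel * BH)
    (γH : ℝ) (hγH : γH = SH * BH ^ 2 / SwH)
    (wH : ℝ) (hwH : wH = 2 * M * γH ^ 2 / (1 + M * γH))
    (D : Fin d → Matrix (Fin M) (Fin M) ℂ)
    (hD : ∀ i, D i = Matrix.diagonal fun m => (g i m : ℂ))
    (S : ℝ → Matrix (Fin M) (Fin M) ℂ)
    (S' : Fin d → ℝ → Matrix (Fin M) (Fin M) ℂ)
    (hShigh : ∀ f : ℝ, fL < |f| → |f| ≤ fH →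
      S f = ((SH * BH ^ 2 : ℝ) : ℂ) • vecMulVec (v f) (star (v f))
        + ((SwH : ℝ) : ℂ) • (1 : Matrix (Fin M) (Fin M) ℂ))
    (hS'high : ∀ (i : Fin d) (f : ℝ), fL < |f| → |f| ≤ fH →
      S' i f = (2 * π * Complex.I * f * (SH * BH ^ 2)) •
        (vecMulVec (v f) (star (v f)) * D i - D i * vecMulVec (v f) (star (v f)))) :
    0 < lamSel ∧ lamSel < SH + N0 ∧
    (fH - fL) * Real.logb 2 ((SH + N0) / lamSel) = R ∧
    ∀ i j : Fin d,
      (1 / 2 : ℂ) * ∫ f in {f : ℝ | fL < |f| ∧ |f| ≤ fH},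
          Matrix.trace ((S f)⁻¹ * S' i f * (S f)⁻¹ * S' j f)
        = (((4 * π ^ 2 / 3) * (fH ^ 3 - fL ^ 3) * wH * G i j : ℝ) : ℂ) :=
  band_selective_FI_rate_general d M hM τ g P hP G hG v hv fL fH SH N0 R hfL hfLH hSH hN0 hR lamSel
    hlamSel BH hBH SwH hSwH γH hγH wH hwH D hD S S' hShigh hS'high
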